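/- arXiv:1905.05334 — 2 statements merged into one kernel-verified Lean document; each statement's English description precedes it below -/
import Mathlib

section
/- Let l ≥ 2, let i₁, …, i_l ∈ [n] be pairwise distinct and j₁, …, j_l ∈ [m] be pairwise distinct, and let L : [n]×[m] → ℝ be the weight matrix of the frustrated loop i₁−j₁−i₂−j₂−⋯−i_l−j_l−i₁: L_{i_k, j_k} = +1 for k = 1,…,l; L_{i_{k+1}, j_k} = +1 for k = 1,…,l−1; L_{i₁, j_l} = −1; and all other entries are 0. Then there exist l−1 loop-atom matrices A^{(1)}, …, A^{(l−1)} — each supported on a 2×2 block given by two distinct rows and two distinct columns, with three entries equal to +1 and one entry equal to −1 — such that L = Σ_{k=1}^{l−1} A^{(k)}. -/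
open Finset

/-!
Write `l = p + 1`. The `k`-th atom (`k < p`) lives on rows `i k`, `i (k + 1)` and columns `j k`,
`j p`, with its `-1` at `(i k, j p)`. In the sum of the atoms the column `j p` telescopes to
`+1` at `i p` and `-1` at `i 0`, and the other entries are exactly the edges `(i k, j k)`,
`(i (k + 1), j k)` of the loop. Since a frustrated loop matrix is determined by `i` and `j`,
this identifies the sum with `L`.
-/

/-- A loop atom (with negative weight `-1`): a matrix supported on two distinct rows
and two distinct columns, with three supported entries equal to `+1` and one equal
to `-1`. -/
def IsLoopAtom {n m : ℕ} (A : Fin n → Fin m → ℝ) : Prop :=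
  ∃ (i₁ i₂ : Fin n) (j₁ j₂ : Fin m), i₁ ≠ i₂ ∧ j₁ ≠ j₂ ∧
    ((A i₁ j₁ = -1 ∧ A i₁ j₂ = 1 ∧ A i₂ j₁ = 1 ∧ A i₂ j₂ = 1) ∨
     (A i₁ j₁ = 1 ∧ A i₁ j₂ = -1 ∧ A i₂ j₁ = 1 ∧ A i₂ j₂ = 1) ∨
     (A i₁ j₁ = 1 ∧ A i₁ j₂ = 1 ∧ A i₂ j₁ = -1 ∧ A i₂ j₂ = 1) ∨
     (A i₁ j₁ = 1 ∧ A i₁ j₂ = 1 ∧ A i₂ j₁ = 1 ∧ A i₂ j₂ = -1)) ∧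
    (∀ i j, ¬((i = i₁ ∨ i = i₂) ∧ (j = j₁ ∨ j = j₂)) → A i j = 0)

open Matrix

section
variable {α β : Type*}

def IsFrustratedLoop {l : ℕ} [NeZero l] (i : Fin l → α) (j : Fin l → β)
    (L : α → β → ℝ) : Prop :=
  (∀ k, L (i k) (j k) = 1) ∧ (∀ k, k ≠ -1 → L (i (k + 1)) (j k) = 1) ∧
    L (i 0) (j (-1)) = -1 ∧
    ∀ a b, (∀ k, ¬(a = i k ∧ b = j k)) → (∀ k, ¬(a = i (k + 1) ∧ b = j k)) → L a b = 0

theorem IsFrustratedLoop.unique {l : ℕ} [NeZero l] {i : Fin l → α} {j : Fin l → β}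
    {L L' : α → β → ℝ} (hL : IsFrustratedLoop i j L) (hL' : IsFrustratedLoop i j L') :
    L = L' := by
  obtain ⟨h₁, h₂, h₃, h₀⟩ := hL
  obtain ⟨h₁', h₂', h₃', h₀'⟩ := hL'
  ext a b
  by_cases hd : ∃ k, a = i k ∧ b = j k
  · obtain ⟨k, rfl, rfl⟩ := hd
    rw [h₁, h₁']
  by_cases hs : ∃ k, a = i (k + 1) ∧ b = j k
  · obtain ⟨k, rfl, rfl⟩ := hs
    by_cases hk : k = -1
    · subst hk
      rw [neg_add_cancel, h₃, h₃']
    · rw [h₂ k hk, h₂' k hk]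
  rw [h₀ a b (not_exists.mp hd) (not_exists.mp hs),
    h₀' a b (not_exists.mp hd) (not_exists.mp hs)]

variable [DecidableEq α] [DecidableEq β] {p : ℕ}

def loopMatrix (i : Fin (p + 1) → α) (j : Fin (p + 1) → β) : Matrix α β ℝ :=
  ∑ k, single (i k) (j k) 1 + ∑ k : Fin p, single (i k.succ) (j k.castSucc) 1 -
    single (i 0) (j (Fin.last p)) 1

theorem isFrustratedLoop_loopMatrix (hp : p ≠ 0) {i : Fin (p + 1) → α} {j : Fin (p + 1) → β}
    (hi : i.Injective) (hj : j.Injective) : IsFrustratedLoop i j (loopMatrix i j) := by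
  have hlast : (-1 : Fin (p + 1)) = Fin.last p := by ext; simp [Fin.coe_neg_one]
  refine ⟨fun k => ?_, fun k hk => ?_, ?_, fun a b hd hs => ?_⟩
  · have hsucc : ∀ x : Fin p, ¬(x.succ = k ∧ x.castSucc = k) := fun x h =>
      Fin.castSucc_lt_succ.ne (h.2.trans h.1.symm)
    have hclose : ¬(0 = k ∧ Fin.last p = k) := fun h => hp (by simpa using h.2.trans h.1.symm)
    simp [loopMatrix, Matrix.sum_apply, single_apply, hi.eq_iff, hj.eq_iff, hsucc, hclose]
  · obtain ⟨k, rfl⟩ := Fin.exists_castSucc_eq.mpr (hlast ▸ hk)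
    have hdiag : ∀ x, ¬(x = k.succ ∧ x = k.castSucc) := fun x h =>
      Fin.castSucc_lt_succ.ne' (h.1.symm.trans h.2)
    simp [loopMatrix, Matrix.sum_apply, single_apply, hi.eq_iff, hj.eq_iff, Fin.coeSucc_eq_succ,
      hdiag, (Fin.succ_ne_zero k).symm]
  · simp [loopMatrix, Matrix.sum_apply, single_apply, hi.eq_iff, hj.eq_iff, hlast, hp]
  · simp only [loopMatrix, Matrix.sub_apply, Matrix.add_apply, Matrix.sum_apply]
    rw [sum_eq_zero fun k _ => single_apply_of_ne _ _ _ _ _ fun h => hd k ⟨h.1.symm, h.2.symm⟩,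
      sum_eq_zero fun k _ => single_apply_of_ne _ _ _ _ _ fun h =>
        hs k.castSucc ⟨Fin.coeSucc_eq_succ ▸ h.1.symm, h.2.symm⟩,
      single_apply_of_ne _ _ _ _ _ fun h =>
        hs (Fin.last p) ⟨Fin.last_add_one p ▸ h.1.symm, h.2.symm⟩]
    simp

def loopAtom (r₁ r₂ : α) (c₁ c₂ : β) : Matrix α β ℝ :=
  single r₁ c₁ 1 + single r₂ c₁ 1 - single r₁ c₂ 1 + single r₂ c₂ 1

theorem sum_loopAtom_eq_loopMatrix (i : Fin (p + 1) → α) (j : Fin (p + 1) → β) :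
    ∑ k : Fin p, loopAtom (i k.castSucc) (i k.succ) (j k.castSucc) (j (Fin.last p)) =
      loopMatrix i j := by
  set f : Fin (p + 1) → Matrix α β ℝ := fun k => single (i k) (j (Fin.last p)) 1
  have telescope : ∑ k : Fin p, (f k.succ - f k.castSucc) = f (Fin.last p) - f 0 := by
    rw [sum_sub_distrib, sub_eq_sub_iff_add_eq_add, add_comm, ← Fin.sum_univ_succ,
      Fin.sum_univ_castSucc, add_comm]
  calc ∑ k : Fin p, loopAtom (i k.castSucc) (i k.succ) (j k.castSucc) (j (Fin.last p))
      = ∑ k : Fin p, single (i k.castSucc) (j k.castSucc) 1 +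
          ∑ k : Fin p, single (i k.succ) (j k.castSucc) 1 +
          ∑ k : Fin p, (f k.succ - f k.castSucc) := by
        simp only [loopAtom, f, ← sum_add_distrib]
        congr! 1 with k
        abel
    _ = loopMatrix i j := by
        rw [telescope, loopMatrix, Fin.sum_univ_castSucc]
        abel

end

theorem isLoopAtom_loopAtom {n m : ℕ} {r₁ r₂ : Fin n} {c₁ c₂ : Fin m} (hr : r₁ ≠ r₂)
    (hc : c₁ ≠ c₂) : IsLoopAtom (loopAtom r₁ r₂ c₁ c₂) := by
  refine ⟨r₁, r₂, c₁, c₂, hr, hc, Or.inr (Or.inl ?_), fun a b hab => ?_⟩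
  · simp [loopAtom, hr, hr.symm, hc, hc.symm]
  · simp only [loopAtom, Matrix.add_apply, Matrix.sub_apply, single_apply]
    split_ifs <;> grind

/-- A frustrated loop of length `2l` visiting the distinct visible nodes `i 0, …,
i (l-1)` and distinct hidden nodes `j 0, …, j (l-1)` alternately decomposes as a sum
of `l - 1` loop atoms.  Here indices of `Fin l` are cyclic, so `-1` denotes the last
index, the edges `(i k, j k)` and `(i (k+1), j k)` for `k ≠ -1` carry weight `+1`,
and the closing edge `(i 0, j (-1))` carries weight `-1`. -/
theorem frustrated_loop_decomposes_into_atoms (n m l : ℕ) [NeZero l] (hl : 2 ≤ l)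
    (i : Fin l → Fin n) (j : Fin l → Fin m)
    (hi : Function.Injective i) (hj : Function.Injective j)
    (L : Fin n → Fin m → ℝ)
    (hL1 : ∀ k : Fin l, L (i k) (j k) = 1)
    (hL2 : ∀ k : Fin l, k ≠ -1 → L (i (k + 1)) (j k) = 1)
    (hL3 : L (i 0) (j (-1)) = -1)
    (hL0 : ∀ a b, (∀ k : Fin l, ¬(a = i k ∧ b = j k)) →
      (∀ k : Fin l, ¬(a = i (k + 1) ∧ b = j k)) → L a b = 0) :
    ∃ A : Fin (l - 1) → Fin n → Fin m → ℝ,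
      (∀ k, IsLoopAtom (A k)) ∧ ∀ a b, L a b = ∑ k, A k a b := by
  obtain ⟨p, rfl⟩ : ∃ p, l = p + 1 := Nat.exists_eq_add_one.mpr (by omega)
  have hL : L = loopMatrix i j :=
    IsFrustratedLoop.unique ⟨hL1, hL2, hL3, hL0⟩ (isFrustratedLoop_loopMatrix (by omega) hi hj)
  refine ⟨fun k : Fin p => loopAtom (i k.castSucc) (i k.succ) (j k.castSucc) (j (Fin.last p)),
    fun k => isLoopAtom_loopAtom ?_ ?_, fun a b => ?_⟩
  · exact hi.ne Fin.castSucc_lt_succ.ne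
  · exact hj.ne (Fin.castSucc_lt_last k).ne
  · rw [hL, ← sum_loopAtom_eq_loopMatrix, Matrix.sum_apply]
    rfl
end

section
/- Let y : [2]×[3] → ℝ be entrywise nonnegative and suppose that for each of the 12 loop atoms ℓ on [2]×[3] (matrices supported on the two rows and a pair of distinct columns, with three entries +1 and one entry −1), one has Σ_{i,j} ℓ_{ij} y_{ij} ≥ 0. Let w : [2]×[3] → ℝ satisfy: w_{11} ≤ 0, w_{12} ≤ 0, all other entries nonnegative, and the positive-sum conditions w_{11} + w_{21} ≥ 0, w_{12} + w_{22} ≥ 0, w_{11} + w_{12} + w_{13} ≥ 0, and w_{11} + w_{12} + w_{23} ≥ 0. Then Σ_{i,j} w_{ij} y_{ij} ≥ 0. -/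
open Finset

lemma atom1 : IsLoopAtom (![![(-1:ℝ),0,1],![1,0,1]]) := by
  refine ⟨0, 1, 0, 2, by decide, by decide, Or.inl ⟨rfl, rfl, rfl, rfl⟩, ?_⟩
  intro i j h
  fin_cases i <;> fin_cases j <;> simp_all

lemma atom2 : IsLoopAtom (![![(0:ℝ),-1,1],![0,1,1]]) := by
  refine ⟨0, 1, 1, 2, by decide, by decide, Or.inl ⟨rfl, rfl, rfl, rfl⟩, ?_⟩
  intro i j h
  fin_cases i <;> fin_cases j <;> simp_all

theorem farkas_dual_two_by_three
    (y : Fin 2 → Fin 3 → ℝ) (hy : ∀ i j, 0 ≤ y i j)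
    (hatoms : ∀ A : Fin 2 → Fin 3 → ℝ, IsLoopAtom A →
      0 ≤ ∑ i, ∑ j, A i j * y i j)
    (w : Fin 2 → Fin 3 → ℝ)
    (hw11 : w 0 0 ≤ 0) (hw12 : w 0 1 ≤ 0)
    (hw13 : 0 ≤ w 0 2) (hw21 : 0 ≤ w 1 0) (hw22 : 0 ≤ w 1 1) (hw23 : 0 ≤ w 1 2)
    (hps1 : 0 ≤ w 0 0 + w 1 0) (hps2 : 0 ≤ w 0 1 + w 1 1)
    (hps3 : 0 ≤ w 0 0 + w 0 1 + w 0 2) (hps4 : 0 ≤ w 0 0 + w 0 1 + w 1 2) :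
    0 ≤ ∑ i, ∑ j, w i j * y i j := by
  have h1 := hatoms _ atom1
  have h2 := hatoms _ atom2
  simp [Fin.sum_univ_succ] at h1 h2 ⊢
  nlinarith [mul_nonneg (neg_nonneg.2 hw11) h1, mul_nonneg (neg_nonneg.2 hw12) h2,
    mul_nonneg hps3 (hy 0 2), mul_nonneg hps1 (hy 1 0), mul_nonneg hps2 (hy 1 1),
    mul_nonneg hps4 (hy 1 2), hy 0 0, hy 0 1]
end
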